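/- Let P be a half-stationary product measure on X = {0,1}^ℤ for which the shift T is nonsingular. If T is conservative with respect to P, then T is ergodic: every measurable set A ⊆ X with T⁻¹A = A satisfies P(A) = 0 or P(A) = 1. -/

import Mathlib

open MeasureTheory Filter Topology
open scoped ENNReal

noncomputable section

namespace NSB

/-- The two-sided shift by `n` on `X = {0,1}^ℤ` (with `Bool`: `false` = 0, `true` = 1):
`(shift n x) k = x (k + n)`.  The shift `T` of the paper is `shift 1`. -/
def shift (n : ℤ) (x : ℤ → Bool) : ℤ → Bool := fun k => x (k + n)

/-- `P` is the product probability measure `∏_{k ∈ ℤ} P_k` on `{0,1}^ℤ` with marginals `p`,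
where `p k b` is the probability that coordinate `k` equals `b`. -/
def IsProductMeasure (P : Measure (ℤ → Bool)) (p : ℤ → Bool → ℝ) : Prop :=
  IsProbabilityMeasure P ∧
  (∀ k b, 0 ≤ p k b) ∧ (∀ k, p k false + p k true = 1) ∧
  ∀ (s : Finset ℤ) (y : ℤ → Bool),
    P {x | ∀ i ∈ s, x i = y i} = ∏ i ∈ s, ENNReal.ofReal (p i (y i))

/-- Half-stationarity (with `p = 1/2`): `P_k(0) = P_k(1) = 1/2` for all `k ≤ 0`. -/
def HalfStationary (p : ℤ → Bool → ℝ) : Prop :=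
  ∀ k : ℤ, k ≤ 0 → p k false = 1 / 2

/-- The shift is nonsingular with respect to `P` : `P` and the pushforward of `P`
under the shift are mutually absolutely continuous. -/
def Nonsingular (P : Measure (ℤ → Bool)) : Prop :=
  P ≪ P.map (shift 1) ∧ P.map (shift 1) ≪ P

/-- `rnd P n = T^{n'} = d(P∘Tⁿ)/dP`, where `(P∘Tⁿ)(A) := P(Tⁿ A) = (P.map (shift (-n))) A`
(the shift is invertible with inverse `shift (-1)`). -/
def rnd (P : Measure (ℤ → Bool)) (n : ℕ) : (ℤ → Bool) → ℝ≥0∞ :=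
  (P.map (shift (-(n : ℤ)))).rnDeriv P

/-- Conservativity via Hopf's criterion: `∑_{n ≥ 1} T^{n'}(x) = ∞` for `P`-a.e. `x`. -/
def Conservative (P : Measure (ℤ → Bool)) : Prop :=
  ∀ᵐ x ∂P, ∑' n : ℕ, rnd P (n + 1) x = ⊤

/-- Dissipativity: `∑_{n ≥ 1} T^{n'}(x) < ∞` for `P`-a.e. `x`. -/
def Dissipative (P : Measure (ℤ → Bool)) : Prop :=
  ∀ᵐ x ∂P, ∑' n : ℕ, rnd P (n + 1) x ≠ ⊤

/-- Ergodicity of the shift with respect to `P`. -/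
def ErgodicShift (P : Measure (ℤ → Bool)) : Prop :=
  ∀ A : Set (ℤ → Bool), MeasurableSet A → shift 1 ⁻¹' A = A → P A = 0 ∨ P A = 1

/-- Existence of an absolutely continuous invariant probability:
a probability `ν` with `ν∘T⁻¹ = ν` which is mutually absolutely continuous with `P`. -/
def HasACIP (P : Measure (ℤ → Bool)) : Prop :=
  ∃ ν : Measure (ℤ → Bool),
    IsProbabilityMeasure ν ∧ ν.map (shift 1) = ν ∧ ν ≪ P ∧ P ≪ ν

/-- The measure `m = e^s ds` on `ℝ`. -/
def expM : Measure ℝ := volume.withDensity fun s => ENNReal.ofReal (Real.exp s)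

/-- The Maharam extension `T̃(x,s) = (Tx, s + log T^{1'}(x))` of the shift. -/
def maharam (P : Measure (ℤ → Bool)) : (ℤ → Bool) × ℝ → (ℤ → Bool) × ℝ :=
  fun q => (shift 1 q.1, q.2 + Real.log ((rnd P 1 q.1).toReal))

/-- The inverse of the Maharam extension of the shift. -/
def maharamInv (P : Measure (ℤ → Bool)) : (ℤ → Bool) × ℝ → (ℤ → Bool) × ℝ :=
  fun q => (shift (-1) q.1, q.2 - Real.log ((rnd P 1 (shift (-1) q.1)).toReal))

/-- The Kakutani–Hellinger distance
`d(P, T_*ⁿP) = ∑_{i ∈ ℤ} [(√P_i(0) − √P_{i−n}(0))² + (√P_i(1) − √P_{i−n}(1))²]`. -/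
def dHell (p : ℤ → Bool → ℝ) (n : ℕ) : ℝ :=
  ∑' i : ℤ, ((Real.sqrt (p i false) - Real.sqrt (p (i - (n : ℤ)) false)) ^ 2 +
    (Real.sqrt (p i true) - Real.sqrt (p (i - (n : ℤ)) true)) ^ 2)

/-! ### The one-sided space `X⁺`

`X⁺ = {0,1}^{ℕ ≥ 1}` is realized as `ℕ → Bool`, where the index `i : ℕ` corresponds
to the coordinate `i + 1` of the paper (so the marginal of index `i` is `P_{i+1}`). -/

/-- `Q` is the product probability measure on `{0,1}^ℕ` with marginals `q`. -/
def IsProductMeasureN (Q : Measure (ℕ → Bool)) (q : ℕ → Bool → ℝ) : Prop :=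
  IsProbabilityMeasure Q ∧
  (∀ k b, 0 ≤ q k b) ∧ (∀ k, q k false + q k true = 1) ∧
  ∀ (s : Finset ℕ) (y : ℕ → Bool),
    Q {x | ∀ i ∈ s, x i = y i} = ∏ i ∈ s, ENNReal.ofReal (q i (y i))

/-- The binary odometer (adding machine) `τ`: the first `false` coordinate is turned
into `true` and all (`true`) coordinates before it are turned into `false`;
on the (a.e. irrelevant) all-`true` sequence we let `τ` be the identity. -/
def odometer (x : ℕ → Bool) : ℕ → Bool :=
  haveI := Classical.propDecidable (∃ n, x n = false)
  if h : ∃ n, x n = false then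
    fun i => if i < Nat.find h then false else if i = Nat.find h then true else x i
  else x

/-- The inverse `τ⁻¹` of the binary odometer (defined analogously, a.e. inverse to `τ`). -/
def odometerInv (x : ℕ → Bool) : ℕ → Bool :=
  haveI := Classical.propDecidable (∃ n, x n = true)
  if h : ∃ n, x n = true then
    fun i => if i < Nat.find h then true else if i = Nat.find h then false else x i
  else x

/-- `rndOdo Q n = d(P⁺∘τⁿ)/dP⁺`, where `(P⁺∘τⁿ)(A) := P⁺(τⁿ A) = (Q.map (τ⁻¹ ^[n])) A`. -/
def rndOdo (Q : Measure (ℕ → Bool)) (n : ℕ) : (ℕ → Bool) → ℝ≥0∞ :=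
  (Q.map (odometerInv^[n])).rnDeriv Q

/-- The one-sided shift `σ` on `X⁺`. -/
def oneShift (y : ℕ → Bool) : ℕ → Bool := fun i => y (i + 1)

/-- The Radon–Nikodym derivative of the odometer,
`τ'(x) = (P_{φ(x)}(1)/P_{φ(x)}(0)) · ∏_{k=1}^{φ(x)−1} P_k(0)/P_k(1)`,
where `φ(x) = min {n ≥ 1 : x_n = 0}` (in our indexing, `φ(x) = Nat.find h + 1`). -/
def tauDeriv (p : ℤ → Bool → ℝ) (x : ℕ → Bool) : ℝ :=
  haveI := Classical.propDecidable (∃ n, x n = false)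
  if h : ∃ n, x n = false then
    (p ((Nat.find h : ℤ) + 1) true / p ((Nat.find h : ℤ) + 1) false) *
      ∏ i ∈ Finset.range (Nat.find h), (p ((i : ℤ) + 1) false / p ((i : ℤ) + 1) true)
  else 1

/-- The Maharam extension `τ̃(x,s) = (τx, s + log τ'(x))` of the odometer. -/
def maharamOdo (p : ℤ → Bool → ℝ) : (ℕ → Bool) × ℝ → (ℕ → Bool) × ℝ :=
  fun q => (odometer q.1, q.2 + Real.log (tauDeriv p q.1))

/-- The function `φ(x) := ∑_{k=1}^∞ log (P_{k−1}(x_k)/P_k(x_k))` (denoted `Phi` here),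
defined as the limit of the partial sums (junk value if the series diverges);
in our indexing the `k`-th term is `log (P_i(x_{i+1})/P_{i+1}(x_{i+1}))` with `i = k − 1`. -/
def Phi (p : ℤ → Bool → ℝ) (y : ℕ → Bool) : ℝ :=
  limUnder atTop fun M : ℕ =>
    ∑ i ∈ Finset.range M, Real.log (p (i : ℤ) (y i) / p ((i : ℤ) + 1) (y i))

open Set

lemma shift_shift (a b : ℤ) (x : ℤ → Bool) : shift a (shift b x) = shift (a + b) x := by
  funext k; simp [shift, add_assoc]

lemma shift_comp (a b : ℤ) : shift a ∘ shift b = shift (a + b) := by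
  funext x; exact shift_shift a b x

lemma shift_zero_apply (x : ℤ → Bool) : shift 0 x = x := by funext k; simp [shift]

lemma measurable_shift (n : ℤ) : Measurable (shift n) :=
  measurable_pi_lambda _ (fun k => measurable_pi_apply (k + n))

lemma shift_preimage_preimage (a b : ℤ) (S : Set (ℤ → Bool)) :
    shift a ⁻¹' (shift b ⁻¹' S) = shift (b + a) ⁻¹' S := by
  ext x; simp only [Set.mem_preimage, shift_shift]

lemma preimage_shift_invariant {A : Set (ℤ → Bool)} (hA : shift 1 ⁻¹' A = A) :
    ∀ n : ℤ, shift n ⁻¹' A = A := by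
  have hpos : ∀ n : ℕ, shift (n : ℤ) ⁻¹' A = A := by
    intro n
    induction n with
    | zero => ext x; simp [shift_zero_apply]
    | succ n ih =>
      have : ((n : ℤ) + 1) = (((n+1 : ℕ)) : ℤ) := by push_cast; ring
      calc shift ((n+1 : ℕ) : ℤ) ⁻¹' A = shift 1 ⁻¹' (shift (n : ℤ) ⁻¹' A) := by
            rw [shift_preimage_preimage, this]
        _ = A := by rw [ih, hA]
  intro n
  rcases n.eq_nat_or_neg with ⟨m, rfl | rfl⟩
  · exact hpos m
  · have hsurj : Function.Surjective (shift (m : ℤ)) := by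
      intro y; exact ⟨shift (-(m:ℤ)) y, by rw [shift_shift]; simp [shift_zero_apply]⟩
    apply Set.preimage_injective.mpr hsurj
    rw [shift_preimage_preimage]
    simp only [neg_add_cancel, hpos m]
    ext x; simp [shift_zero_apply]

/-! cylinders -/

def cyl {ι : Type*} (s : Finset ι) (y : ι → Bool) : Set (ι → Bool) := {x | ∀ i ∈ s, x i = y i}

lemma measurableSet_cyl {ι : Type*} (s : Finset ι) (y : ι → Bool) :
    MeasurableSet (cyl s y) := by
  have : cyl s y = ⋂ i ∈ s, {x : ι → Bool | x i = y i} := by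
    ext x; simp [cyl]
  rw [this]
  refine MeasurableSet.biInter s.countable_toSet (fun i _ => ?_)
  have : {x : ι → Bool | x i = y i} = (fun x : ι → Bool => x i) ⁻¹' {y i} := by ext u; simp
  rw [this]
  exact (measurable_pi_apply i) (MeasurableSet.singleton (y i))

lemma isPiSystem_cyl {ι : Type*} : IsPiSystem {S : Set (ι → Bool) | ∃ s y, S = cyl s y} := by
  classical
  rintro _ ⟨s₁, y₁, rfl⟩ _ ⟨s₂, y₂, rfl⟩ ⟨x, hx₁, hx₂⟩
  refine ⟨s₁ ∪ s₂, x, ?_⟩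
  ext u
  simp only [cyl, Set.mem_inter_iff, Set.mem_setOf_eq, Finset.mem_union]
  constructor
  · rintro ⟨h1, h2⟩ i (hi | hi)
    · rw [h1 i hi]; exact (hx₁ i hi).symm ▸ rfl
    · rw [h2 i hi]; exact (hx₂ i hi).symm ▸ rfl
  · intro h
    constructor
    · intro i hi; rw [h i (Or.inl hi)]; exact hx₁ i hi
    · intro i hi; rw [h i (Or.inr hi)]; exact hx₂ i hi

lemma generateFrom_cyl {ι : Type*} :
    (MeasurableSpace.pi : MeasurableSpace (ι → Bool)) =
      MeasurableSpace.generateFrom {S : Set (ι → Bool) | ∃ s y, S = cyl s y} := by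
  apply le_antisymm
  · rw [MeasurableSpace.pi]
    apply iSup_le
    intro i
    rw [← measurable_iff_comap_le]
    refine @measurable_to_countable' Bool (ι → Bool) _ _
      (MeasurableSpace.generateFrom {S | ∃ s y, S = cyl s y}) _ (fun b => ?_)
    apply MeasurableSpace.measurableSet_generateFrom
    exact ⟨{i}, fun _ => b, by ext u; simp [cyl]⟩
  · apply MeasurableSpace.generateFrom_le
    rintro _ ⟨s, y, rfl⟩
    exact measurableSet_cyl s y

lemma measure_ext_cyl {ι : Type*} (μ ν : Measure (ι → Bool))
    [IsProbabilityMeasure μ] [IsProbabilityMeasure ν]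
    (h : ∀ (s : Finset ι) (y : ι → Bool), μ (cyl s y) = ν (cyl s y)) : μ = ν := by
  refine ext_of_generate_finite _ generateFrom_cyl isPiSystem_cyl ?_ (by simp)
  rintro _ ⟨s, y, rfl⟩
  exact h s y


/-! absolute continuity -/

section AC
variable {P : Measure (ℤ → Bool)}

lemma map_shift_absCont (hns : Nonsingular P) : ∀ m : ℤ, P.map (shift m) ≪ P := by
  have key : ∀ (a : ℤ), (P.map (shift a)).map (shift 1) = P.map (shift (1 + a)) := by
    intro a
    rw [Measure.map_map (measurable_shift 1) (measurable_shift a), shift_comp]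
  have keyneg : ∀ (a : ℤ), (P.map (shift a)).map (shift (-1)) = P.map (shift (-1 + a)) := by
    intro a
    rw [Measure.map_map (measurable_shift (-1)) (measurable_shift a), shift_comp]
  have h0 : P.map (shift 0) = P := by
    have : shift 0 = id := funext shift_zero_apply
    rw [this, Measure.map_id]
  have hneg1 : P.map (shift (-1)) ≪ P := by
    have h1 : P.map (shift (-1)) ≪ (P.map (shift 1)).map (shift (-1)) :=
      hns.1.map (measurable_shift (-1))
    have h2 : (P.map (shift 1)).map (shift (-1)) = P := by
      rw [keyneg 1]; norm_num [h0]
    rwa [h2] at h1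
  have hpos : ∀ n : ℕ, P.map (shift (n : ℤ)) ≪ P := by
    intro n
    induction n with
    | zero => simp only [Int.natCast_zero, h0]; exact Measure.AbsolutelyContinuous.rfl
    | succ n ih =>
      have : P.map (shift ((n+1 : ℕ) : ℤ)) = (P.map (shift (n : ℤ))).map (shift 1) := by
        rw [key]; congr 1; push_cast; ring_nf
      rw [this]
      exact ((ih.map (measurable_shift 1)).trans hns.2)
  have hneg : ∀ n : ℕ, P.map (shift (-(n : ℤ))) ≪ P := by
    intro n
    induction n with
    | zero => simp only [Int.natCast_zero, neg_zero, h0]; exact Measure.AbsolutelyContinuous.rfl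
    | succ n ih =>
      have : P.map (shift (-((n+1 : ℕ) : ℤ))) = (P.map (shift (-(n : ℤ)))).map (shift (-1)) := by
        rw [keyneg]; congr 1; push_cast; ring_nf
      rw [this]
      exact ((ih.map (measurable_shift (-1))).trans hneg1)
  intro m
  rcases m.eq_nat_or_neg with ⟨k, rfl | rfl⟩
  · exact hpos k
  · exact hneg k

lemma shift_qmp (hns : Nonsingular P) (m : ℤ) :
    Measure.QuasiMeasurePreserving (shift m) P P :=
  ⟨measurable_shift m, map_shift_absCont hns m⟩

/-- Wandering sets are null (Hopf's criterion direction used). -/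
lemma wandering_null [IsProbabilityMeasure P] (hns : Nonsingular P) (hc : Conservative P)
    {D : Set (ℤ → Bool)} (hD : MeasurableSet D)
    (hdisj : ∀ k : ℕ, D ∩ shift ((k : ℤ) + 1) ⁻¹' D = ∅) : P D = 0 := by
  classical
  -- the backward translates are pairwise disjoint
  set E : ℕ → Set (ℤ → Bool) := fun n => shift (-((n : ℤ) + 1)) ⁻¹' D with hE
  have hEmeas : ∀ n, MeasurableSet (E n) := fun n => (measurable_shift _) hD
  have haux : ∀ n m : ℕ, m < n → E n ∩ E m = ∅ := by
    intro n m h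
    ext x
    simp only [hE, Set.mem_inter_iff, Set.mem_preimage, Set.mem_empty_iff_false, iff_false]
    rintro ⟨hx1, hx2⟩
    -- y := shift (-(n+1)) x ∈ D and shift (n - m) y = shift (-(m+1)) x ∈ D
    have hy : shift ((n : ℤ) - m) (shift (-((n:ℤ) + 1)) x) = shift (-((m:ℤ) + 1)) x := by
      rw [shift_shift]; congr 1; ring
    have : shift (-((n:ℤ)+1)) x ∈ D ∩ shift (((n - m - 1 : ℕ) : ℤ) + 1) ⁻¹' D := by
      refine ⟨hx1, ?_⟩
      show shift _ (shift (-((n:ℤ)+1)) x) ∈ D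
      have hcast : ((n - m - 1 : ℕ) : ℤ) + 1 = (n : ℤ) - m := by
        have : (m : ℤ) < n := by exact_mod_cast h
        push_cast [Nat.cast_sub (by omega : 1 ≤ n - m), Nat.cast_sub (by omega : m ≤ n)]
        ring
      rw [hcast, hy]; exact hx2
    rw [hdisj (n - m - 1)] at this
    exact this
  have hEdisj : Pairwise (Function.onFun Disjoint E) := by
    intro n m hnm
    rcases hnm.lt_or_gt with h | h
    · exact Set.disjoint_iff_inter_eq_empty.mpr (by rw [Set.inter_comm]; exact haux m n h)
    · exact Set.disjoint_iff_inter_eq_empty.mpr (haux n m h)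
  have hsum : ∑' n : ℕ, P (E n) ≤ 1 := by
    rw [← measure_iUnion hEdisj hEmeas]
    exact prob_le_one
  -- each term equals ∫⁻ in D of rnd
  have hterm : ∀ n : ℕ, P (E n) = ∫⁻ x in D, rnd P (n + 1) x ∂P := by
    intro n
    have hac : P.map (shift (-((n : ℤ) + 1))) ≪ P := map_shift_absCont hns _
    have : P (E n) = P.map (shift (-((n : ℤ) + 1))) D := by
      rw [Measure.map_apply (measurable_shift _) hD]
    rw [this]
    have hcast : -((n : ℤ) + 1) = -(((n + 1 : ℕ) : ℤ)) := by push_cast; ring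
    rw [hcast]
    haveI : (P.map (shift (-(((n + 1 : ℕ)) : ℤ)))).HaveLebesgueDecomposition P :=
      Measure.haveLebesgueDecomposition_of_sigmaFinite _ _
    exact (Measure.setLIntegral_rnDeriv (by rw [← hcast]; exact hac) D).symm
  by_contra hPD
  have hPDpos : 0 < P D := by
    rcases eq_or_lt_of_le (zero_le : 0 ≤ P D) with h | h
    · exact absurd h.symm hPD
    · exact h
  have htop : ∫⁻ x in D, (∑' n : ℕ, rnd P (n + 1) x) ∂P = ⊤ := by
    have hae : ∀ᵐ x ∂(P.restrict D), (∑' n : ℕ, rnd P (n + 1) x) = ⊤ :=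
      ae_restrict_of_ae hc
    have heq : ∫⁻ x in D, (∑' n : ℕ, rnd P (n + 1) x) ∂P = ∫⁻ _ in D, ⊤ ∂P :=
      lintegral_congr_ae (by filter_upwards [hae] with x hx; rw [hx])
    rw [heq, lintegral_const, Measure.restrict_apply_univ]
    exact ENNReal.top_mul hPD
  have hfin : ∫⁻ x in D, (∑' n : ℕ, rnd P (n + 1) x) ∂P ≤ 1 := by
    have h1 : ∫⁻ x in D, (∑' n : ℕ, rnd P (n + 1) x) ∂P
        = ∑' n : ℕ, ∫⁻ x in D, rnd P (n+1) x ∂P :=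
      lintegral_tsum (fun n => (Measure.measurable_rnDeriv _ _).aemeasurable)
    rw [h1]
    calc ∑' n : ℕ, ∫⁻ x in D, rnd P (n+1) x ∂P = ∑' n : ℕ, P (E n) := by
          congr 1; funext n; exact (hterm n).symm
      _ ≤ 1 := hsum
  rw [htop] at hfin
  exact absurd hfin (by simp)

/-- An almost-invariant increasing set: `P (shift 1 ⁻¹' Y \ Y) = 0`. -/
lemma almost_invariant [IsProbabilityMeasure P] (hns : Nonsingular P) (hc : Conservative P)
    {Y : Set (ℤ → Bool)} (hY : MeasurableSet Y) (hsub : Y ⊆ shift 1 ⁻¹' Y) :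
    P (shift 1 ⁻¹' Y \ Y) = 0 := by
  set D := shift 1 ⁻¹' Y \ Y with hD
  have hDmeas : MeasurableSet D := ((measurable_shift 1) hY).diff hY
  -- x ∈ D implies shift j x ∈ Y for all j ≥ 1
  have hchain : ∀ x ∈ D, ∀ j : ℕ, shift ((j : ℤ) + 1) x ∈ Y := by
    rintro x ⟨hx1, hx2⟩ j
    induction j with
    | zero => simpa using hx1
    | succ j ih =>
      have : shift (((j+1 : ℕ) : ℤ) + 1) x = shift 1 (shift ((j : ℤ) + 1) x) := by
        rw [shift_shift]; congr 1; push_cast; ring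
      rw [this]
      exact hsub ih
  apply wandering_null hns hc hDmeas
  intro k
  ext x
  simp only [Set.mem_inter_iff, Set.mem_preimage, Set.mem_empty_iff_false, iff_false]
  rintro ⟨hx, hx'⟩
  exact hx'.2 (hchain x hx k)

/-- Invariance transported along shifts. -/
lemma preimage_shift_ae_eq [IsProbabilityMeasure P] (hns : Nonsingular P) (hc : Conservative P)
    {Y : Set (ℤ → Bool)} (hY : MeasurableSet Y) (hsub : Y ⊆ shift 1 ⁻¹' Y) (N : ℕ) :
    P (shift (N : ℤ) ⁻¹' Y) = P Y := by
  -- chain : Y ⊆ shift N ⁻¹' Y, and the difference is a countable union of null sets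
  have hmono : ∀ n : ℕ, shift (n : ℤ) ⁻¹' Y ⊆ shift ((n : ℤ) + 1) ⁻¹' Y := by
    intro n x hx
    have : shift 1 (shift (n : ℤ) x) = shift ((n : ℤ) + 1) x := by rw [shift_shift]; congr 1; ring
    have h2 := hsub hx
    rwa [Set.mem_preimage, this] at h2
  have hdiffnull : P (shift (N : ℤ) ⁻¹' Y \ Y) = 0 := by
    induction N with
    | zero =>
      have : shift ((0:ℕ) : ℤ) ⁻¹' Y = Y := by ext x; simp [shift_zero_apply]
      rw [this]; simp
    | succ n ih =>
      have hstep : shift ((n+1 : ℕ) : ℤ) ⁻¹' Y \ Y ⊆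
          (shift (n : ℤ) ⁻¹' (shift 1 ⁻¹' Y \ Y)) ∪ (shift (n : ℤ) ⁻¹' Y \ Y) := by
        intro x hx
        by_cases h : x ∈ shift (n : ℤ) ⁻¹' Y
        · right; exact ⟨h, hx.2⟩
        · left
          refine ⟨?_, h⟩
          have : shift 1 (shift (n : ℤ) x) = shift ((n+1 : ℕ) : ℤ) x := by
            rw [shift_shift]; congr 1; push_cast; ring
          rw [Set.mem_preimage, this]
          exact hx.1
      refine measure_mono_null hstep (le_antisymm ?_ zero_le)
      calc P _ ≤ P (shift (n : ℤ) ⁻¹' (shift 1 ⁻¹' Y \ Y)) + P (shift (n : ℤ) ⁻¹' Y \ Y) :=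
            measure_union_le _ _
        _ ≤ 0 + 0 := by
            gcongr
            · exact le_of_eq ((shift_qmp hns (n : ℤ)).preimage_null
                (almost_invariant hns hc hY hsub))
            · exact le_of_eq ih
        _ = 0 := by simp
  have hsubN : ∀ M : ℕ, Y ⊆ shift (M : ℤ) ⁻¹' Y := by
    intro N
    induction N with
    | zero => intro x hx; simpa [shift_zero_apply] using hx
    | succ n ih =>
      refine ih.trans ?_
      intro x hx
      have h2 := hmono n hx
      have hcast : ((n : ℤ) + 1) = ((n + 1 : ℕ) : ℤ) := by push_cast; ring
      rwa [hcast] at h2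
  apply le_antisymm
  · calc P (shift (N : ℤ) ⁻¹' Y) ≤ P (Y ∪ (shift (N : ℤ) ⁻¹' Y \ Y)) :=
        measure_mono (fun x hx => by by_cases h : x ∈ Y; exact Or.inl h; exact Or.inr ⟨hx, h⟩)
    _ ≤ P Y + P (shift (N : ℤ) ⁻¹' Y \ Y) := measure_union_le _ _
    _ = P Y := by rw [hdiffnull, add_zero]
  · exact measure_mono (hsubN N)

end AC

/-! product structure -/

section Main
variable {P : Measure (ℤ → Bool)} {p : ℤ → Bool → ℝ}

lemma pfair (hP : IsProductMeasure P p) (hhs : HalfStationary p) :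
    ∀ k : ℤ, k ≤ 0 → ∀ b, p k b = 1/2 := by
  intro k hk b
  cases b with
  | false => exact hhs k hk
  | true =>
    have h1 := hP.2.2.1 k
    have h2 := hhs k hk
    linarith

lemma hPcyl (hP : IsProductMeasure P p) (s : Finset ℤ) (y : ℤ → Bool) :
    P (cyl s y) = ∏ i ∈ s, ENNReal.ofReal (p i (y i)) := hP.2.2.2 s y

/-- The left (past) coordinates. -/
abbrev Lft := {k : ℤ // k ≤ 0}

def restrictL : (ℤ → Bool) → (Lft → Bool) := fun x j => x j.val

lemma measurable_restrictL : Measurable restrictL :=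
  measurable_pi_lambda _ (fun j => measurable_pi_apply j.val)

def alpha (P : Measure (ℤ → Bool)) : Measure (Lft → Bool) := P.map restrictL

instance alpha_prob [IsProbabilityMeasure P] : IsProbabilityMeasure (alpha P) :=
  Measure.isProbabilityMeasure_map measurable_restrictL.aemeasurable

/-- Recombination: fill coordinates `≤ -n` with the (shifted) `ω`-coordinates. -/
def recomb (n : ℕ) : ((Lft → Bool) × (ℤ → Bool)) → (ℤ → Bool) :=
  fun q k => if h : k ≤ -(n:ℤ) then q.1 ⟨k + n, by omega⟩ else q.2 k

lemma measurable_recomb (n : ℕ) : Measurable (recomb n) := by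
  apply measurable_pi_lambda
  intro k
  by_cases h : k ≤ -(n:ℤ)
  · simp only [recomb, dif_pos h]
    exact (measurable_pi_apply _).comp measurable_fst
  · simp only [recomb, dif_neg h]
    exact (measurable_pi_apply _).comp measurable_snd

/-- generic: measure of a subtype cylinder under a restriction map -/
lemma alpha_cyl (hP : IsProductMeasure P p) (sq : Finset Lft) (ysub : Lft → Bool) :
    alpha P (cyl sq ysub) =
      ∏ j ∈ sq, ENNReal.ofReal (p j.val (ysub j)) := by
  classical
  haveI := hP.1
  rw [alpha, Measure.map_apply measurable_restrictL (measurableSet_cyl sq ysub)]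
  set yext : ℤ → Bool := fun k => if h : k ≤ 0 then ysub ⟨k, h⟩ else false with hyext
  have hpre : restrictL ⁻¹' cyl sq ysub
      = cyl (sq.map ⟨Subtype.val, Subtype.val_injective⟩) yext := by
    ext x
    simp only [Set.mem_preimage, cyl, Set.mem_setOf_eq, Finset.mem_map,
      Function.Embedding.coeFn_mk, restrictL]
    constructor
    · rintro h k ⟨j, hj, rfl⟩
      rw [hyext]
      simp only [dif_pos j.prop]
      rw [Subtype.eta]
      exact h j hj
    · intro h j hj
      have := h j.val ⟨j, hj, rfl⟩
      simp only [hyext, dif_pos j.prop, Subtype.eta] at this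
      exact this
  rw [hpre, hPcyl hP, Finset.prod_map]
  apply Finset.prod_congr rfl
  intro j hj
  have hy : yext j.val = ysub j := by
    simp only [hyext, dif_pos j.prop, Subtype.eta]
  simp only [Function.Embedding.coeFn_mk, hy]

lemma mapRecomb (hP : IsProductMeasure P p) (hhs : HalfStationary p) (n : ℕ) :
    ((alpha P).prod P).map (recomb n) = P := by
  classical
  haveI := hP.1
  haveI : IsProbabilityMeasure (((alpha P).prod P).map (recomb n)) :=
    Measure.isProbabilityMeasure_map (measurable_recomb n).aemeasurable
  apply measure_ext_cyl
  intro s y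
  rw [Measure.map_apply (measurable_recomb n) (measurableSet_cyl s y)]
  set A1 : Set (Lft → Bool) :=
    {ω | ∀ i ∈ s, ∀ h : i ≤ -(n:ℤ), ω ⟨i + n, by omega⟩ = y i} with hA1
  set A2 : Set (ℤ → Bool) := {x | ∀ i ∈ s, ¬ i ≤ -(n:ℤ) → x i = y i} with hA2def
  have hpre : recomb n ⁻¹' cyl s y = A1 ×ˢ A2 := by
    ext ⟨ω, x⟩
    simp only [Set.mem_preimage, cyl, Set.mem_setOf_eq, Set.mem_prod, hA1, hA2def, recomb]
    constructor
    · intro h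
      constructor
      · intro i hi hle
        have := h i hi
        rwa [dif_pos hle] at this
      · intro i hi hle
        have := h i hi
        rwa [dif_neg hle] at this
    · rintro ⟨h1, h2⟩ i hi
      by_cases hle : i ≤ -(n:ℤ)
      · rw [dif_pos hle]; exact h1 i hi hle
      · rw [dif_neg hle]; exact h2 i hi hle
  -- express A1 as a subtype cylinder
  set T : Finset ℤ := (s.filter (fun i => i ≤ -(n:ℤ))).image (fun i => i + (n:ℤ)) with hT
  have hTle : ∀ j ∈ T, j ≤ (0:ℤ) := by
    intro j hj
    simp only [hT, Finset.mem_image, Finset.mem_filter] at hj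
    obtain ⟨i, ⟨_, hle⟩, rfl⟩ := hj
    omega
  set sL : Finset Lft := T.subtype (fun j => j ≤ (0:ℤ)) with hsL
  set yL : Lft → Bool := fun j => y (j.val - n) with hyL
  have hA1cyl : A1 = cyl sL yL := by
    ext ω
    simp only [hA1, Set.mem_setOf_eq, cyl, hsL, Finset.mem_subtype, hT, Finset.mem_image,
      Finset.mem_filter]
    constructor
    · rintro h j ⟨i, ⟨hi, hle⟩, hij⟩
      have hjeq : j = ⟨i + n, by omega⟩ := by
        apply Subtype.ext; simp [← hij]
      rw [hjeq]
      have := h i hi hle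
      rw [this, hyL]
      show y i = y ((i + (n:ℤ)) - n)
      congr 1
      omega
    · intro h i hi hle
      have := h ⟨i + n, by omega⟩ ⟨i, ⟨hi, hle⟩, rfl⟩
      rw [this, hyL]
      show y ((i + (n:ℤ)) - n) = y i
      congr 1
      omega
  have hA1val : alpha P A1 = ∏ i ∈ s.filter (fun i => i ≤ -(n:ℤ)), ENNReal.ofReal (p i (y i)) := by
    rw [hA1cyl, alpha_cyl hP]
    symm
    apply Finset.prod_bij (fun (a : ℤ) (ha : a ∈ s.filter (fun i => i ≤ -(n:ℤ))) =>
      (⟨a + n, by have := (Finset.mem_filter.mp ha).2; omega⟩ : Lft))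
    · intro a ha
      simp only [hsL, Finset.mem_subtype, hT, Finset.mem_image]
      exact ⟨a, ha, rfl⟩
    · intro a ha b hb hab
      have : a + (n:ℤ) = b + n := congrArg Subtype.val hab
      omega
    · intro j hj
      simp only [hsL, Finset.mem_subtype, hT, Finset.mem_image, Finset.mem_filter] at hj
      obtain ⟨i, ⟨hi, hle⟩, hij⟩ := hj
      exact ⟨i, Finset.mem_filter.mpr ⟨hi, hle⟩, Subtype.ext hij⟩
    · intro a ha
      have hle := (Finset.mem_filter.mp ha).2
      have h1 : p a (y a) = 1/2 := pfair hP hhs a (by omega) (y a)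
      have h2 : yL ⟨a + n, by omega⟩ = y a := by
        rw [hyL]
        show y ((a + (n:ℤ)) - n) = y a
        congr 1
        omega
      have h3 : p (a + (n:ℤ)) (y a) = 1/2 := pfair hP hhs (a + n) (by omega) (y a)
      rw [h2]
      show ENNReal.ofReal (p a (y a)) = ENNReal.ofReal (p (a + (n:ℤ)) (y a))
      rw [h1, h3]
  have hA2cyl : A2 = cyl (s.filter (fun i => ¬ i ≤ -(n:ℤ))) y := by
    ext x
    simp only [hA2def, Set.mem_setOf_eq, cyl, Finset.mem_filter]
    constructor
    · rintro h i ⟨hi, hle⟩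
      exact h i hi hle
    · intro h i hi hle
      exact h i ⟨hi, hle⟩
  rw [hpre, Measure.prod_prod, hA1val, hA2cyl, hPcyl hP, hPcyl hP,
    Finset.prod_filter_mul_prod_filter_not]


/-! right coordinates and filtration -/

def restrictR (n : ℕ) : (ℤ → Bool) → ({k : ℤ // ¬ k ≤ -(n:ℤ)} → Bool) := fun x j => x j.val

lemma measurable_restrictR (n : ℕ) : Measurable (restrictR n) :=
  measurable_pi_lambda _ (fun j => measurable_pi_apply j.val)

def mfil (n : ℕ) : MeasurableSpace (ℤ → Bool) :=
  MeasurableSpace.comap (restrictR n) MeasurableSpace.pi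

lemma mfil_le (n : ℕ) : mfil n ≤ MeasurableSpace.pi :=
  (measurable_restrictR n).comap_le

lemma mfil_mono : ∀ n : ℕ, mfil n ≤ mfil (n+1) := by
  intro n
  have hproj : Measurable (fun (z : {k : ℤ // ¬ k ≤ -((n+1:ℕ):ℤ)} → Bool)
      (j : {k : ℤ // ¬ k ≤ -(n:ℤ)}) => z ⟨j.val, by have := j.prop; push_cast; omega⟩) :=
    measurable_pi_lambda _ (fun j => measurable_pi_apply _)
  have hcomp : restrictR n = (fun (z : {k : ℤ // ¬ k ≤ -((n+1:ℕ):ℤ)} → Bool)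
      (j : {k : ℤ // ¬ k ≤ -(n:ℤ)}) => z ⟨j.val, by have := j.prop; push_cast; omega⟩)
      ∘ restrictR (n+1) := by
    funext x
    rfl
  rw [mfil, hcomp, ← MeasurableSpace.comap_comp]
  exact MeasurableSpace.comap_mono hproj.comap_le

lemma measurable_restrictR_self (n : ℕ) :
    Measurable[mfil n] (restrictR n) := Measurable.of_comap_le le_rfl

lemma iSup_mfil : (⨆ n, mfil n) = (MeasurableSpace.pi : MeasurableSpace (ℤ → Bool)) := by
  apply le_antisymm
  · exact iSup_le mfil_le
  · have hpi : (MeasurableSpace.pi : MeasurableSpace (ℤ → Bool))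
        = ⨆ k : ℤ, MeasurableSpace.comap (fun x : ℤ → Bool => x k) inferInstance := rfl
    rw [hpi]
    apply iSup_le
    intro k
    set n : ℕ := (1 - k).toNat with hn
    have hk : ¬ k ≤ -(n:ℤ) := by
      simp only [hn]
      omega
    have h1 : Measurable[mfil n] (fun x : ℤ → Bool => x k) := by
      have heq : (fun x : ℤ → Bool => x k) = (fun z : {j : ℤ // ¬ j ≤ -(n:ℤ)} → Bool =>
          z ⟨k, hk⟩) ∘ restrictR n := rfl
      rw [heq]
      exact (measurable_pi_apply _).comp (measurable_restrictR_self n)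
    exact le_trans h1.comap_le (le_iSup mfil n)

lemma recomb_mem_iff {n : ℕ} {S : Set (ℤ → Bool)} (hS : MeasurableSet[mfil n] S)
    (ω : Lft → Bool) (x : ℤ → Bool) : recomb n (ω, x) ∈ S ↔ x ∈ S := by
  obtain ⟨T, -, rfl⟩ := hS
  have : restrictR n (recomb n (ω, x)) = restrictR n x := by
    funext j
    have hj := j.prop
    show recomb n (ω, x) j.val = x j.val
    simp only [recomb, dif_neg hj]
  simp only [Set.mem_preimage, this]

/-! the conditional expectation functions -/

def indA (A : Set (ℤ → Bool)) : (ℤ → Bool) → ℝ := A.indicator (fun _ => (1:ℝ))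

def G (P : Measure (ℤ → Bool)) (A : Set (ℤ → Bool)) (n : ℕ) : (ℤ → Bool) → ℝ :=
  fun x => ∫ ω, indA A (recomb n (ω, x)) ∂(alpha P)

variable {A : Set (ℤ → Bool)}

lemma indA_measurable (hA : MeasurableSet A) : Measurable (indA A) :=
  measurable_const.indicator hA

lemma indA_integrable [IsProbabilityMeasure P] (hA : MeasurableSet A) :
    Integrable (indA A) P := by
  rw [indA]
  exact (integrable_const (1:ℝ)).indicator hA

def recomb2 (n : ℕ) : ((Lft → Bool) × ({k : ℤ // ¬ k ≤ -(n:ℤ)} → Bool)) → (ℤ → Bool) :=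
  fun q k => if h : k ≤ -(n:ℤ) then q.1 ⟨k + n, by omega⟩ else q.2 ⟨k, h⟩

lemma measurable_recomb2 (n : ℕ) : Measurable (recomb2 n) := by
  apply measurable_pi_lambda
  intro k
  by_cases h : k ≤ -(n:ℤ)
  · simp only [recomb2, dif_pos h]
    exact (measurable_pi_apply _).comp measurable_fst
  · simp only [recomb2, dif_neg h]
    exact (measurable_pi_apply _).comp measurable_snd

lemma recomb2_restrict (n : ℕ) (ω : Lft → Bool) (x : ℤ → Bool) :
    recomb2 n (ω, restrictR n x) = recomb n (ω, x) := by
  funext k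
  by_cases h : k ≤ -(n:ℤ)
  · simp only [recomb2, recomb, dif_pos h]
  · simp only [recomb2, recomb, dif_neg h]
    rfl

lemma G_stronglyMeasurable [IsProbabilityMeasure P] (hA : MeasurableSet A) (n : ℕ) :
    StronglyMeasurable[mfil n] (G P A n) := by
  have h1 : StronglyMeasurable
      (fun q : (Lft → Bool) × ({k : ℤ // ¬ k ≤ -(n:ℤ)} → Bool) => indA A (recomb2 n q)) :=
    ((indA_measurable hA).comp (measurable_recomb2 n)).stronglyMeasurable
  have h2 := h1.integral_prod_left' (μ := alpha P)
  have heq : G P A n = (fun z => ∫ ω, indA A (recomb2 n (ω, z)) ∂(alpha P)) ∘ restrictR n := by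
    funext x
    show G P A n x = ∫ ω, indA A (recomb2 n (ω, restrictR n x)) ∂(alpha P)
    unfold G
    refine integral_congr_ae (Filter.Eventually.of_forall (fun ω => ?_))
    show indA A (recomb n (ω, x)) = indA A (recomb2 n (ω, restrictR n x))
    rw [recomb2_restrict]
  rw [heq]
  exact h2.comp_measurable (measurable_restrictR_self n)

lemma G_norm_le [IsProbabilityMeasure P] (n : ℕ) (x : ℤ → Bool) : ‖G P A n x‖ ≤ 1 := by
  have h1 : ‖G P A n x‖ ≤ ∫ ω, ‖indA A (recomb n (ω, x))‖ ∂(alpha P) :=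
    norm_integral_le_integral_norm _
  refine h1.trans ?_
  have h2 : ∀ ω, ‖indA A (recomb n (ω, x))‖ ≤ 1 := by
    intro ω
    rw [indA]
    by_cases h : recomb n (ω, x) ∈ A
    · simp [Set.indicator_of_mem h]
    · simp [Set.indicator_of_notMem h]
  calc ∫ ω, ‖indA A (recomb n (ω, x))‖ ∂(alpha P) ≤ ∫ _, (1:ℝ) ∂(alpha P) := by
        apply integral_mono_of_nonneg
        · exact Filter.Eventually.of_forall (fun ω => norm_nonneg _)
        · exact integrable_const 1
        · exact Filter.Eventually.of_forall h2
    _ = 1 := by simp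

lemma G_integrable [IsProbabilityMeasure P] (hA : MeasurableSet A) (n : ℕ) :
    Integrable (G P A n) P := by
  refine Integrable.mono' (integrable_const (1:ℝ))
    (((G_stronglyMeasurable hA n).mono (mfil_le n)).aestronglyMeasurable) ?_
  exact Filter.Eventually.of_forall (G_norm_le n)

lemma indicator_comp_recomb {E : Set (ℤ → Bool)} (hE : MeasurableSet E) (n : ℕ) :
    (fun q : (Lft → Bool) × (ℤ → Bool) => indA E (recomb n q))
      = (recomb n ⁻¹' E).indicator (fun _ => (1:ℝ)) := by
  funext q
  rw [indA]
  by_cases h : recomb n q ∈ E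
  · rw [Set.indicator_of_mem h, Set.indicator_of_mem (by exact h)]
  · rw [Set.indicator_of_notMem h, Set.indicator_of_notMem (by exact h)]

lemma setIntegral_G (hP : IsProductMeasure P p) (hhs : HalfStationary p)
    (hA : MeasurableSet A) (n : ℕ) {S : Set (ℤ → Bool)} (hS : MeasurableSet[mfil n] S) :
    ∫ x in S, G P A n x ∂P = ∫ x in S, indA A x ∂P := by
  haveI := hP.1
  have hSm : MeasurableSet S := mfil_le n _ hS
  have key : ∀ x, S.indicator (G P A n) x = ∫ ω, indA (A ∩ S) (recomb n (ω, x)) ∂(alpha P) := by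
    intro x
    by_cases hx : x ∈ S
    · rw [Set.indicator_of_mem hx]
      unfold G
      congr 1
      funext ω
      have hmem : recomb n (ω, x) ∈ S := (recomb_mem_iff hS ω x).mpr hx
      rw [indA, indA]
      by_cases h : recomb n (ω, x) ∈ A
      · rw [Set.indicator_of_mem h, Set.indicator_of_mem (Set.mem_inter h hmem)]
      · rw [Set.indicator_of_notMem h, Set.indicator_of_notMem (fun hc => h hc.1)]
    · rw [Set.indicator_of_notMem hx]
      symm
      have : ∀ ω, indA (A ∩ S) (recomb n (ω, x)) = 0 := by
        intro ω
        have hmem : recomb n (ω, x) ∉ S := fun hc => hx ((recomb_mem_iff hS ω x).mp hc)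
        rw [indA, Set.indicator_of_notMem (fun hc => hmem hc.2)]
      simp only [this, integral_zero]
  have hint : Integrable (fun q : (Lft → Bool) × (ℤ → Bool) => indA (A ∩ S) (recomb n q))
      ((alpha P).prod P) := by
    rw [indicator_comp_recomb (hA.inter hSm)]
    exact (integrable_const (1:ℝ)).indicator ((measurable_recomb n) (hA.inter hSm))
  calc ∫ x in S, G P A n x ∂P = ∫ x, S.indicator (G P A n) x ∂P := (integral_indicator hSm).symm
    _ = ∫ x, (∫ ω, indA (A ∩ S) (recomb n (ω, x)) ∂(alpha P)) ∂P := by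
        congr 1; funext x; exact key x
    _ = ∫ q, indA (A ∩ S) (recomb n q) ∂((alpha P).prod P) := (integral_prod_symm _ hint).symm
    _ = ∫ z, indA (A ∩ S) z ∂(((alpha P).prod P).map (recomb n)) := by
        rw [integral_map (measurable_recomb n).aemeasurable]
        exact ((indA_measurable (hA.inter hSm)).comp measurable_id).stronglyMeasurable.aestronglyMeasurable
    _ = ∫ z, indA (A ∩ S) z ∂P := by rw [mapRecomb hP hhs n]
    _ = ∫ x in S, indA A x ∂P := by
        rw [← integral_indicator hSm]
        congr 1
        funext x
        rw [indA, indA, Set.indicator_indicator, Set.inter_comm]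

lemma G_condexp (hP : IsProductMeasure P p) (hhs : HalfStationary p)
    (hA : MeasurableSet A) (n : ℕ) :
    G P A n =ᵐ[P] P[indA A | mfil n] := by
  haveI := hP.1
  haveI : SigmaFinite (P.trim (mfil_le n)) := inferInstance
  exact ae_eq_condExp_of_forall_setIntegral_eq (mfil_le n) (indA_integrable hA)
    (fun s _ _ => (G_integrable hA n).integrableOn)
    (fun s hs _ => setIntegral_G hP hhs hA n hs)
    ((G_stronglyMeasurable hA n).aestronglyMeasurable)


def filt : Filtration ℕ (MeasurableSpace.pi : MeasurableSpace (ℤ → Bool)) where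
  seq := mfil
  mono' := monotone_nat_of_le_succ mfil_mono
  le' := mfil_le

lemma G_tendsto_ae (hP : IsProductMeasure P p) (hhs : HalfStationary p) (hA : MeasurableSet A) :
    ∀ᵐ x ∂P, Tendsto (fun n => G P A n x) atTop (𝓝 (indA A x)) := by
  haveI := hP.1
  have hmeas : StronglyMeasurable[⨆ n, filt n] (indA A) := by
    have h : (⨆ n, filt n) = (MeasurableSpace.pi : MeasurableSpace (ℤ → Bool)) := iSup_mfil
    rw [h]
    exact (indA_measurable hA).stronglyMeasurable
  haveI : SigmaFiniteFiltration P filt := inferInstance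
  have h := Integrable.tendsto_ae_condExp (μ := P) (ℱ := filt) (indA_integrable hA) hmeas
  have hae : ∀ᵐ x ∂P, ∀ n : ℕ, G P A n x = (P[indA A | filt n]) x := by
    rw [ae_all_iff]
    exact fun n => G_condexp hP hhs hA n
  filter_upwards [h, hae] with x hx heq
  have h2 : (fun n => G P A n x) = (fun n => (P[indA A| filt n]) x) := funext heq
  rw [h2]
  exact hx

lemma recomb_shift (n : ℕ) (ω : Lft → Bool) (x : ℤ → Bool) :
    recomb n (ω, shift (n:ℤ) x) = shift (n:ℤ) (recomb 0 (ω, x)) := by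
  funext k
  simp only [recomb, shift]
  by_cases h : k ≤ -(n:ℤ)
  · rw [dif_pos h, dif_pos (show k + (n:ℤ) ≤ -((0:ℕ):ℤ) by push_cast; omega)]
    congr 1
    apply Subtype.ext
    show k + (n:ℤ) = k + (n:ℤ) + ((0:ℕ):ℤ)
    push_cast
    ring
  · rw [dif_neg h, dif_neg (show ¬ (k + (n:ℤ) ≤ -((0:ℕ):ℤ)) by push_cast; omega)]

lemma indA_shift (hAinv : shift 1 ⁻¹' A = A) (m : ℤ) (x : ℤ → Bool) :
    indA A (shift m x) = indA A x := by
  have hz : shift m x ∈ A ↔ x ∈ A := by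
    conv_rhs => rw [← preimage_shift_invariant hAinv m]
    exact Iff.rfl
  rw [indA]
  by_cases h : x ∈ A
  · rw [Set.indicator_of_mem (hz.mpr h), Set.indicator_of_mem h]
  · rw [Set.indicator_of_notMem (fun hc => h (hz.mp hc)), Set.indicator_of_notMem h]

lemma G_shift (hAinv : shift 1 ⁻¹' A = A) (n : ℕ) (x : ℤ → Bool) :
    G P A n (shift (n:ℤ) x) = G P A 0 x := by
  unfold G
  refine integral_congr_ae (Filter.Eventually.of_forall (fun ω => ?_))
  show indA A (recomb n (ω, shift (n:ℤ) x)) = indA A (recomb 0 (ω, x))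
  rw [recomb_shift]
  exact indA_shift hAinv _ _

/-- Core lemma: an exactly invariant set agrees a.e. with its conditional
expectation on the future coordinates. -/
lemma A_future (hP : IsProductMeasure P p) (hhs : HalfStationary p)
    (hns : Nonsingular P) (hc : Conservative P)
    (hA : MeasurableSet A) (hAinv : shift 1 ⁻¹' A = A) :
    ∀ᵐ x ∂P, G P A 0 x = indA A x := by
  haveI := hP.1
  set g : ℕ → (ℤ → Bool) → ℝ := fun n x => |G P A n x - indA A x| with hg
  have hgmeas : ∀ n, Measurable (g n) := by
    intro n
    exact (((G_stronglyMeasurable hA n).mono (mfil_le n)).measurable.sub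
      (indA_measurable hA)).abs
  have htrans : ∀ (n : ℕ) (x : ℤ → Bool), g n (shift (n:ℤ) x) = g 0 x := by
    intro n x
    simp only [hg]
    rw [G_shift hAinv, indA_shift hAinv]
  have htend : ∀ᵐ x ∂P, Tendsto (fun n => g n x) atTop (𝓝 0) := by
    filter_upwards [G_tendsto_ae hP hhs hA] with x hx
    have h2 : Tendsto (fun n => G P A n x - indA A x) atTop (𝓝 0) := by
      have := hx.sub (tendsto_const_nhds (x := indA A x))
      simpa using this
    have h3 := h2.abs
    simpa using h3
  have hkey : ∀ η : ℝ, 0 < η → P {x | η < g 0 x} = 0 := by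
    intro η hη
    set W : ℕ → Set (ℤ → Bool) := fun N => ⋂ n, {x | N ≤ n → g n x ≤ η} with hW
    have hWmeas : ∀ N, MeasurableSet (W N) := by
      intro N
      refine MeasurableSet.iInter (fun n => ?_)
      by_cases h : N ≤ n
      · have : {x : ℤ → Bool | N ≤ n → g n x ≤ η} = {x | g n x ≤ η} := by
          ext x; simp [h]
        rw [this]
        exact measurableSet_le (hgmeas n) measurable_const
      · have : {x : ℤ → Bool | N ≤ n → g n x ≤ η} = Set.univ := by
          ext x; simp [h]
        rw [this]
        exact MeasurableSet.univ
    have hWmono : ∀ N, W N ⊆ W (N+1) := by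
      intro N x hx
      simp only [hW, Set.mem_iInter, Set.mem_setOf_eq] at hx ⊢
      intro n hn
      exact hx n (by omega)
    have hWcnull : P (⋂ N, (W N)ᶜ) = 0 := by
      have hnull : P {x | ¬ Tendsto (fun n => g n x) atTop (𝓝 0)} = 0 := by
        have := htend
        rwa [MeasureTheory.ae_iff] at this
      refine measure_mono_null ?_ hnull
      intro x hx
      simp only [Set.mem_iInter, Set.mem_compl_iff, hW, Set.mem_setOf_eq, not_forall] at hx
      intro htd
      have hev : ∀ᶠ n in atTop, g n x ≤ η := htd.eventually (eventually_le_nhds hη)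
      obtain ⟨N, hN⟩ := Filter.eventually_atTop.mp hev
      obtain ⟨n, hn⟩ := hx N
      simp only [Set.mem_setOf_eq, not_forall, not_le] at hn
      obtain ⟨hn1, hn2⟩ := hn
      exact absurd (hN n hn1) (not_le.mpr hn2)
    have hWc_tendsto : Tendsto (fun N => P ((W N)ᶜ)) atTop (𝓝 0) := by
      have hmono : Monotone W := monotone_nat_of_le_succ hWmono
      have ha : Antitone (fun N => (W N)ᶜ) := fun a b hab =>
        Set.compl_subset_compl.mpr (hmono hab)
      have := tendsto_measure_iInter_atTop (μ := P)
        (fun N => ((hWmeas N).compl).nullMeasurableSet) ha ⟨0, measure_ne_top _ _⟩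
      rwa [hWcnull] at this
    -- for each N, the bad set is contained in a pullback of an almost invariant set
    have hbound : ∀ N : ℕ, P {x | η < g 0 x} ≤ P ((W N)ᶜ) := by
      intro N
      set Y : Set (ℤ → Bool) := ⋂ j : ℕ, shift (j:ℤ) ⁻¹' ((W N)ᶜ) with hY
      have hYmeas : MeasurableSet Y :=
        MeasurableSet.iInter (fun j => (measurable_shift _) ((hWmeas N).compl))
      have hYsub : Y ⊆ shift 1 ⁻¹' Y := by
        intro x hx
        simp only [hY, Set.mem_iInter, Set.mem_preimage] at hx ⊢
        intro j
        have h2 := hx (j+1)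
        have h3 : shift ((j:ℤ)) (shift 1 x) = shift (((j+1:ℕ)):ℤ) x := by
          rw [shift_shift]
          congr 1 <;> omega
        rw [h3]
        exact h2
      have hGsub : {x | η < g 0 x} ⊆ shift (N:ℤ) ⁻¹' Y := by
        intro x hx
        simp only [Set.mem_setOf_eq] at hx
        simp only [hY, Set.mem_preimage, Set.mem_iInter]
        intro j
        have h3 : shift (j:ℤ) (shift (N:ℤ) x) = shift (((j+N:ℕ)):ℤ) x := by
          rw [shift_shift]
          congr 1 <;> omega
        rw [h3]
        simp only [Set.mem_compl_iff, hW, Set.mem_iInter, Set.mem_setOf_eq, not_forall]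
        refine ⟨j + N, ?_⟩
        simp only [not_le, not_forall, exists_prop]
        refine ⟨by omega, ?_⟩
        rw [htrans (j+N) x]
        exact hx
      have hYW : Y ⊆ (W N)ᶜ := by
        intro x hx
        simp only [hY, Set.mem_iInter, Set.mem_preimage] at hx
        have h2 := hx 0
        rwa [show ((0:ℕ):ℤ) = 0 from rfl, shift_zero_apply] at h2
      calc P {x | η < g 0 x} ≤ P (shift (N:ℤ) ⁻¹' Y) := measure_mono hGsub
        _ = P Y := preimage_shift_ae_eq hns hc hYmeas hYsub N
        _ ≤ P ((W N)ᶜ) := measure_mono hYW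
    have h0 : P {x | η < g 0 x} ≤ 0 :=
      ge_of_tendsto hWc_tendsto (Filter.Eventually.of_forall hbound)
    exact le_antisymm h0 zero_le
  -- conclude
  have hnull : P {x | g 0 x ≠ 0} = 0 := by
    have hsub : {x | g 0 x ≠ 0} ⊆ ⋃ k : ℕ, {x | 1/((k:ℝ)+1) < g 0 x} := by
      intro x hx
      simp only [Set.mem_setOf_eq] at hx
      have hpos : 0 < g 0 x := lt_of_le_of_ne (abs_nonneg _) (Ne.symm hx)
      obtain ⟨k, hk⟩ := exists_nat_one_div_lt hpos
      exact Set.mem_iUnion.mpr ⟨k, hk⟩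
    refine measure_mono_null hsub ?_
    refine le_antisymm ?_ zero_le
    calc P (⋃ k : ℕ, {x | 1/((k:ℝ)+1) < g 0 x})
        ≤ ∑' k : ℕ, P {x | 1/((k:ℝ)+1) < g 0 x} := measure_iUnion_le _
      _ = 0 := ENNReal.tsum_eq_zero.mpr (fun k => hkey _ (by positivity))
  have hae0 : ∀ᵐ x ∂P, g 0 x = 0 := by
    rw [MeasureTheory.ae_iff]
    exact hnull
  filter_upwards [hae0] with x hx
  have h2 : G P A 0 x - indA A x = 0 := by
    have := abs_eq_zero.mp hx
    exact this
  linarith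


/-! bootstrap to the tail σ-algebra and Kolmogorov 0-1 -/

def coordAlg (i : ℕ) : MeasurableSpace (ℤ → Bool) :=
  MeasurableSpace.comap (fun x : ℤ → Bool => x ((i:ℤ)+1)) inferInstance

lemma coordAlg_le (i : ℕ) : coordAlg i ≤ MeasurableSpace.pi :=
  (measurable_pi_apply _).comap_le

lemma coordAlg_generate (i : ℕ) :
    coordAlg i = MeasurableSpace.generateFrom
      {S : Set (ℤ → Bool) | ∃ b, S = {x | x ((i:ℤ)+1) = b}} := by
  apply le_antisymm
  · rw [coordAlg, ← measurable_iff_comap_le]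
    refine @measurable_to_countable' Bool (ℤ → Bool) _ _
      (MeasurableSpace.generateFrom {S | ∃ b, S = {x | x ((i:ℤ)+1) = b}}) _ (fun b => ?_)
    apply MeasurableSpace.measurableSet_generateFrom
    exact ⟨b, by ext u; simp⟩
  · apply MeasurableSpace.generateFrom_le
    rintro _ ⟨b, rfl⟩
    exact ⟨{b}, trivial, by ext u; simp⟩

lemma coordAlg_piSystem (i : ℕ) :
    IsPiSystem {S : Set (ℤ → Bool) | ∃ b, S = {x | x ((i:ℤ)+1) = b}} := by
  rintro _ ⟨b₁, rfl⟩ _ ⟨b₂, rfl⟩ ⟨x, hx₁, hx₂⟩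
  have : b₁ = b₂ := by
    simp only [Set.mem_setOf_eq] at hx₁ hx₂
    rw [← hx₁, ← hx₂]
  subst this
  refine ⟨b₁, by ext u; simp⟩

lemma coordAlg_indep (hP : IsProductMeasure P p) :
    ProbabilityTheory.iIndep coordAlg P := by
  classical
  haveI := hP.1
  refine ProbabilityTheory.iIndepSets.iIndep coordAlg_le
    (fun i => {S : Set (ℤ → Bool) | ∃ b, S = {x | x ((i:ℤ)+1) = b}})
    coordAlg_piSystem coordAlg_generate ?_
  rw [ProbabilityTheory.iIndepSets_iff]
  intro t f hf
  have hb : ∀ i ∈ t, ∃ b : Bool, f i = {x | x ((i:ℤ)+1) = b} := hf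
  choose! b hb using hb
  set emb : ℕ ↪ ℤ := ⟨fun i => (i:ℤ)+1, fun a c h => by simpa using h⟩ with hemb
  set y : ℤ → Bool := fun k => b (k - 1).toNat with hy
  have h1 : (⋂ i ∈ t, f i) = cyl (t.map emb) y := by
    ext x
    simp only [Set.mem_iInter, cyl, Set.mem_setOf_eq, Finset.mem_map, hemb,
      Function.Embedding.coeFn_mk]
    constructor
    · rintro h k ⟨i, hi, rfl⟩
      have := h i hi
      rw [hb i hi] at this
      simp only [Set.mem_setOf_eq] at this
      show x ((i:ℤ)+1) = y ((i:ℤ)+1)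
      rw [this, hy]
      have htn : (((i:ℤ) + 1) - 1).toNat = i := by omega
      simp only [htn]
    · intro h i hi
      rw [hb i hi]
      have := h ((i:ℤ)+1) ⟨i, hi, rfl⟩
      simp only [Set.mem_setOf_eq]
      rw [this, hy]
      have htn : (((i:ℤ) + 1) - 1).toNat = i := by omega
      simp only [htn]
  rw [h1, hPcyl hP, Finset.prod_map]
  apply Finset.prod_congr rfl
  intro i hi
  have h2 : f i = cyl {(i:ℤ)+1} (fun _ => b i) := by
    rw [hb i hi]
    ext x
    simp [cyl]
  rw [h2, hPcyl hP, Finset.prod_singleton]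
  have h3 : y ((i:ℤ)+1) = b i := by
    rw [hy]
    have htn : (((i:ℤ) + 1) - 1).toNat = i := by omega
    simp only [htn]
  show ENNReal.ofReal (p ((i:ℤ)+1) (y ((i:ℤ)+1))) = ENNReal.ofReal (p ((i:ℤ)+1) (b i))
  rw [h3]

/-- membership of the shifted future set in the tail algebras -/
lemma Bm_tail_measurable {B0 : Set (ℤ → Bool)} (hB0 : MeasurableSet[mfil 0] B0) (m : ℕ) :
    MeasurableSet[⨆ i, ⨆ (_ : m ≤ i), coordAlg i] (shift (m:ℤ) ⁻¹' B0) := by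
  have h1 : MeasurableSet[MeasurableSpace.comap (shift (m:ℤ)) (mfil 0)]
      (shift (m:ℤ) ⁻¹' B0) := ⟨B0, hB0, rfl⟩
  suffices hle2 : MeasurableSpace.comap (shift (m:ℤ)) (mfil 0)
      ≤ ⨆ i, ⨆ (_ : m ≤ i), coordAlg i by
    exact hle2 _ h1
  have hpi : (MeasurableSpace.pi : MeasurableSpace ({k : ℤ // ¬ k ≤ -((0:ℕ):ℤ)} → Bool))
      = ⨆ j : {k : ℤ // ¬ k ≤ -((0:ℕ):ℤ)}, MeasurableSpace.comap (fun z => z j) inferInstance :=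
    rfl
  rw [mfil, hpi, MeasurableSpace.comap_iSup, MeasurableSpace.comap_iSup]
  apply iSup_le
  intro j
  rw [MeasurableSpace.comap_comp, MeasurableSpace.comap_comp]
  have hj : (1:ℤ) ≤ j.val := by
    have := j.prop
    omega
  set i : ℕ := (j.val + m - 1).toNat with hi
  have hieq : ((i:ℕ):ℤ) + 1 = j.val + m := by omega
  have hcomp : ((fun z : {k : ℤ // ¬ k ≤ -((0:ℕ):ℤ)} → Bool => z j) ∘ restrictR 0 ∘
      shift (m:ℤ)) = (fun x : ℤ → Bool => x ((i:ℤ)+1)) := by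
    funext x
    show x (j.val + m) = x ((i:ℤ)+1)
    rw [hieq]
  rw [hcomp]
  have hmi : m ≤ i := by omega
  exact le_iSup₂_of_le i hmi le_rfl



theorem ergodic_of_conservative' (hP : IsProductMeasure P p) (hhs : HalfStationary p)
    (hns : Nonsingular P) (hc : Conservative P) :
    ErgodicShift P := by
  intro A hA hAinv
  haveI := hP.1
  have hfut := A_future hP hhs hns hc hA hAinv
  set B0 : Set (ℤ → Bool) := {x | (1:ℝ)/2 < G P A 0 x} with hB0def
  have hB0m : MeasurableSet[mfil 0] B0 :=
    (G_stronglyMeasurable hA 0).measurable measurableSet_Ioi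
  have hnull : P {x | ¬ G P A 0 x = indA A x} = 0 := by
    rwa [MeasureTheory.ae_iff] at hfut
  have hAB0 : P (A \ B0) = 0 ∧ P (B0 \ A) = 0 := by
    constructor <;> refine measure_mono_null ?_ hnull
    · rintro x ⟨hxA, hxB⟩
      simp only [Set.mem_setOf_eq]
      intro heq
      apply hxB
      simp only [hB0def, Set.mem_setOf_eq, heq, indA, Set.indicator_of_mem hxA]
      norm_num
    · rintro x ⟨hxB, hxA⟩
      simp only [Set.mem_setOf_eq]
      intro heq
      simp only [hB0def, Set.mem_setOf_eq, heq] at hxB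
      rw [indA, Set.indicator_of_notMem hxA] at hxB
      norm_num at hxB
  set Bm : ℕ → Set (ℤ → Bool) := fun m => shift (m:ℤ) ⁻¹' B0 with hBm
  have hABm : ∀ m : ℕ, P (A \ Bm m) = 0 ∧ P (Bm m \ A) = 0 := by
    intro m
    have hAm : shift (m:ℤ) ⁻¹' A = A := preimage_shift_invariant hAinv m
    constructor
    · have h2 : A \ Bm m = shift (m:ℤ) ⁻¹' (A \ B0) := by
        rw [hBm, Set.preimage_diff, hAm]
      rw [h2]
      exact (shift_qmp hns m).preimage_null hAB0.1
    · have h2 : Bm m \ A = shift (m:ℤ) ⁻¹' (B0 \ A) := by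
        rw [hBm, Set.preimage_diff, hAm]
      rw [h2]
      exact (shift_qmp hns m).preimage_null hAB0.2
  set B : Set (ℤ → Bool) := ⋂ N : ℕ, ⋃ m : ℕ, ⋃ (_ : N ≤ m), Bm m with hB
  have hABnull : P (A \ B) = 0 ∧ P (B \ A) = 0 := by
    have hU : P (⋃ m : ℕ, ((A \ Bm m) ∪ (Bm m \ A))) = 0 := by
      refine le_antisymm ?_ zero_le
      calc P (⋃ m : ℕ, ((A \ Bm m) ∪ (Bm m \ A)))
          ≤ ∑' m : ℕ, P ((A \ Bm m) ∪ (Bm m \ A)) := measure_iUnion_le _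
        _ = 0 := by
          refine ENNReal.tsum_eq_zero.mpr (fun m => le_antisymm ?_ zero_le)
          calc P ((A \ Bm m) ∪ (Bm m \ A)) ≤ P (A \ Bm m) + P (Bm m \ A) :=
                measure_union_le _ _
            _ = 0 := by rw [(hABm m).1, (hABm m).2, add_zero]
    constructor <;> refine measure_mono_null ?_ hU
    · rintro x ⟨hxA, hxB⟩
      simp only [hB, Set.mem_iInter, Set.mem_iUnion, not_forall, not_exists] at hxB
      obtain ⟨N, hN⟩ := hxB
      exact Set.mem_iUnion.mpr ⟨N, Or.inl ⟨hxA, hN N le_rfl⟩⟩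
    · rintro x ⟨hxB, hxA⟩
      simp only [hB, Set.mem_iInter] at hxB
      have h3 := hxB 0
      simp only [Set.mem_iUnion] at h3
      obtain ⟨m, -, hm⟩ := h3
      exact Set.mem_iUnion.mpr ⟨m, Or.inr ⟨hm, hxA⟩⟩
  have htail : MeasurableSet[Filter.limsup coordAlg Filter.atTop] B := by
    rw [Filter.limsup_eq_iInf_iSup_of_nat, MeasurableSpace.measurableSet_iInf]
    intro N
    have hBeq : B = ⋂ N' : ℕ, ⋃ m : ℕ, ⋃ (_ : N + N' ≤ m), Bm m := by
      apply Set.Subset.antisymm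
      · intro x hx
        simp only [hB, Set.mem_iInter] at hx ⊢
        intro N'
        exact hx (N + N')
      · intro x hx
        simp only [hB, Set.mem_iInter] at hx ⊢
        intro K
        have h4 := hx K
        simp only [Set.mem_iUnion] at h4 ⊢
        obtain ⟨m, hm, hmem⟩ := h4
        exact ⟨m, by omega, hmem⟩
    rw [hBeq]
    refine MeasurableSet.iInter (fun N' => ?_)
    refine MeasurableSet.iUnion (fun m => ?_)
    refine MeasurableSet.iUnion (fun hm => ?_)
    have h1 := Bm_tail_measurable hB0m m
    have hle3 : (⨆ i, ⨆ (_ : m ≤ i), coordAlg i) ≤ ⨆ i, ⨆ (_ : N ≤ i), coordAlg i :=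
      iSup₂_le (fun i hi => le_iSup₂_of_le i (by omega) le_rfl)
    exact hle3 _ h1
  have hzo := ProbabilityTheory.measure_zero_or_one_of_measurableSet_limsup_atTop
    coordAlg_le (coordAlg_indep hP) htail
  have hPAB : P A = P B := by
    apply measure_congr
    rw [MeasureTheory.ae_eq_set]
    exact hABnull
  rw [hPAB]
  exact hzo


end Main

/-- A conservative nonsingular half-stationary Bernoulli shift is ergodic. -/
theorem ergodic_of_conservative (P : Measure (ℤ → Bool)) (p : ℤ → Bool → ℝ)
    (hP : IsProductMeasure P p) (hhs : HalfStationary p) (hns : Nonsingular P)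
    (hc : Conservative P) :
    ErgodicShift P :=
  ergodic_of_conservative' hP hhs hns hc

end NSB
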